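/- arXiv:2407.03560 — 9 statements merged into one kernel-verified Lean document; each statement's English description precedes it below -/
import Mathlib

section
/- Let k ≥ 3 be an odd natural number, let j = ⌊k/2⌋, and let A be the 2×2 rational matrix with rows (0, 2^(−j)) and (2^(j+1), 0). Then the exponent semigroup of A equals the additive submonoid of ℕ generated by 2 and k, i.e., S(A) = {2a + kb : a, b ∈ ℕ}. -/
/-- The exponent semigroup of a square rational matrix: the set of natural
numbers `n` such that every entry of `A ^ n` is an integer. -/
def expSemigroup {ι : Type*} [Fintype ι] [DecidableEq ι]
    (A : Matrix ι ι ℚ) : Set ℕ :=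
  {n | ∀ i j, ∃ z : ℤ, (A ^ n) i j = (z : ℚ)}

/-!
Writing `k = 2j + 1`, the matrix `A` squares to `2 • 1`. Hence `A ^ (2m) = 2 ^ m • 1` is always
integral, while `A ^ (2m+1) = 2 ^ m • A` has the entries `2 ^ (m - j)` and `2 ^ (m + j + 1)`, so it
is integral exactly when `m ≥ j`, i.e. `2m + 1 ≥ k`. The even numbers together with the odd
numbers `≥ k` are precisely the sums `2a + kb`.
-/

theorem pow_two_mul_of_sq_eq_smul_one {R α : Type*} [CommSemiring R] [Semiring α] [Algebra R α]
    {x : α} {c : R} (h : x ^ 2 = c • 1) (m : ℕ) : x ^ (2 * m) = c ^ m • 1 := by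
  rw [pow_mul, h, smul_pow, one_pow]

theorem pow_two_mul_add_one_of_sq_eq_smul_one {R α : Type*} [CommSemiring R] [Semiring α]
    [Algebra R α] {x : α} {c : R} (h : x ^ 2 = c • 1) (m : ℕ) : x ^ (2 * m + 1) = c ^ m • x := by
  rw [pow_succ, pow_two_mul_of_sq_eq_smul_one h, smul_mul_assoc, one_mul]

theorem Matrix.antidiag_sq {R : Type*} [CommRing R] (a b : R) :
    !![0, a; b, 0] ^ 2 = (a * b) • (1 : Matrix (Fin 2) (Fin 2) R) := by
  rw [sq, Matrix.mul_fin_two, Matrix.one_fin_two, Matrix.smul_of]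
  simp [mul_comm]

theorem exists_intCast_eq_zpow_iff {p : ℕ} (hp : 1 < p) (e : ℤ) :
    (∃ z : ℤ, (p : ℚ) ^ e = z) ↔ 0 ≤ e := by
  refine ⟨fun ⟨z, hz⟩ => ?_, fun he => ⟨p ^ e.toNat, by simp [← zpow_natCast, he]⟩⟩
  by_contra! he
  obtain ⟨n, hn, rfl⟩ : ∃ n : ℕ, 0 < n ∧ e = -n := ⟨e.natAbs, by omega, by omega⟩
  have hmul : z * (p ^ n : ℕ) = 1 := by
    have : (z : ℚ) * p ^ n = 1 := by
      rw [← hz, zpow_neg, zpow_natCast, inv_mul_cancel₀ (by positivity)]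
    exact_mod_cast this
  have hpn : p ^ n = 1 := by exact_mod_cast Int.eq_one_of_mul_eq_one_left (by positivity) hmul
  rw [Nat.pow_eq_one] at hpn
  omega

theorem exists_two_mul_add_mul_iff {k : ℕ} (hk : Odd k) (n : ℕ) :
    (∃ a b : ℕ, n = 2 * a + k * b) ↔ Even n ∨ k ≤ n := by
  obtain ⟨r, rfl⟩ := hk
  constructor
  · rintro ⟨a, _ | b, rfl⟩
    · exact Or.inl ⟨a, by ring⟩
    · exact Or.inr (by nlinarith)
  · rintro (⟨a, rfl⟩ | hkn)
    · exact ⟨a, 0, by ring⟩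
    · rcases Nat.even_or_odd n with ⟨a, rfl⟩ | ⟨a, rfl⟩
      · exact ⟨a, 0, by ring⟩
      · exact ⟨a - r, 1, by omega⟩

theorem sq_antidiag_two_zpow (j : ℕ) :
    !![(0 : ℚ), (2 : ℚ) ^ (-(j : ℤ)); (2 : ℚ) ^ (j + 1), 0] ^ 2 = (2 : ℚ) • 1 := by
  rw [Matrix.antidiag_sq, pow_succ, zpow_neg, zpow_natCast,
    inv_mul_cancel_left₀ (by positivity)]

theorem mem_expSemigroup_antidiag_two_zpow (j n : ℕ) :
    n ∈ expSemigroup !![(0 : ℚ), (2 : ℚ) ^ (-(j : ℤ)); (2 : ℚ) ^ (j + 1), 0] ↔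
      Even n ∨ 2 * j + 1 ≤ n := by
  have hsq := sq_antidiag_two_zpow j
  obtain ⟨m, rfl | rfl⟩ := Nat.even_or_odd' n
  · refine iff_of_true (fun i i' => ?_) (Or.inl (even_two_mul m))
    rw [pow_two_mul_of_sq_eq_smul_one hsq, Matrix.smul_apply, Matrix.one_apply]
    exact ⟨if i = i' then 2 ^ m else 0, by split_ifs <;> simp⟩
  · have hodd : ¬Even (2 * m + 1) := Nat.not_even_iff_odd.mpr (odd_two_mul_add_one m)
    have hentry : (2 : ℚ) ^ m * 2 ^ (-(j : ℤ)) = 2 ^ ((m : ℤ) - j) := by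
      rw [← zpow_natCast, ← zpow_add₀ two_ne_zero, sub_eq_add_neg]
    simp only [expSemigroup, Set.mem_ofPred_eq, pow_two_mul_add_one_of_sq_eq_smul_one hsq,
      Fin.forall_fin_two]
    simp only [Matrix.smul_apply, Matrix.of_apply, Matrix.cons_val_zero, Matrix.cons_val_one,
      Matrix.cons_val_fin_one, smul_eq_mul, mul_zero, hentry, ← pow_add, hodd, false_or]
    have hzero : ∃ z : ℤ, (0 : ℚ) = z := ⟨0, Int.cast_zero.symm⟩
    have hnat : ∃ z : ℤ, (2 : ℚ) ^ (m + (j + 1)) = z := ⟨2 ^ (m + (j + 1)), by push_cast; rfl⟩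
    have hint := exists_intCast_eq_zpow_iff one_lt_two ((m : ℤ) - j)
    rw [Nat.cast_ofNat] at hint
    simp only [hzero, hnat, hint, true_and, and_true]
    omega

theorem stmt_3_general (k : ℕ) (hodd : Odd k) (j : ℕ) (hj : j = k / 2) :
    expSemigroup !![(0 : ℚ), (2 : ℚ) ^ (-(j : ℤ)); (2 : ℚ) ^ (j + 1), 0]
      = {n : ℕ | ∃ a b : ℕ, n = 2 * a + k * b} := by
  have hk : k = 2 * j + 1 := by
    obtain ⟨r, rfl⟩ := hodd
    omega
  ext n
  rw [mem_expSemigroup_antidiag_two_zpow, Set.mem_ofPred_eq, exists_two_mul_add_mul_iff hodd, hk]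

theorem stmt_3 (k : ℕ) (hk : 3 ≤ k) (hodd : Odd k) (j : ℕ) (hj : j = k / 2) :
    expSemigroup !![(0 : ℚ), (2 : ℚ) ^ (-(j : ℤ)); (2 : ℚ) ^ (j + 1), 0]
      = {n : ℕ | ∃ a b : ℕ, n = 2 * a + k * b} :=
  stmt_3_general k hodd j hj
end

section
/- Let A be a d×d rational matrix. If there exists n ≥ 1 such that every entry of A^n is an integer (i.e., S(A) ≠ {0}), then the characteristic polynomial of A has integer coefficients, i.e., every coefficient of det(xI − A) ∈ ℚ[x] lies in ℤ. -/
open Polynomial Matrix in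
/-- The characteristic polynomial of `A` divides `charpoly (A ^ n)` composed with `X ^ n`. -/
theorem charpoly_dvd_charpoly_pow_comp {d : ℕ} (A : Matrix (Fin d) (Fin d) ℚ) (n : ℕ) :
    A.charpoly ∣ ((A ^ n).charpoly).comp (X ^ n) := by
  classical
  set M0 : Matrix (Fin d) (Fin d) ℚ[X] := (C : ℚ →+* ℚ[X]).mapMatrix A with hM0
  have hc : Commute (Matrix.scalar (Fin d) (X : ℚ[X])) M0 := by
    apply Matrix.scalar_commute
    intro r
    exact Commute.all _ _
  obtain ⟨K, hK⟩ := hc.sub_dvd_pow_sub_pow n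
  set φ : ℚ[X] →+* ℚ[X] := eval₂RingHom (C : ℚ →+* ℚ[X]) (X ^ n) with hφ
  have hcomp : ((A ^ n).charpoly).comp (X ^ n) = φ ((A ^ n).charpoly) := rfl
  have hmapdet : φ ((A ^ n).charpoly) = ((charmatrix (A ^ n)).map φ).det := by
    rw [Matrix.charpoly, RingHom.map_det]
    rfl
  have hmat : (charmatrix (A ^ n)).map φ =
      (Matrix.scalar (Fin d) (X : ℚ[X])) ^ n - M0 ^ n := by
    have h1 : ((Matrix.scalar (Fin d)) (X : ℚ[X])) ^ n
        = (Matrix.scalar (Fin d)) ((X : ℚ[X]) ^ n) := (map_pow _ _ _).symm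
    have h2 : M0 ^ n = (C : ℚ →+* ℚ[X]).mapMatrix (A ^ n) := (map_pow _ _ _).symm
    ext i j
    simp only [Matrix.map_apply, charmatrix_apply, Matrix.sub_apply, h2,
      RingHom.mapMatrix_apply, Matrix.map_apply, map_sub, hφ, coe_eval₂RingHom,
      eval₂_sub, eval₂_C]
    have hXX : eval₂ (C : ℚ →+* ℚ[X]) (X ^ n) ((Matrix.diagonal fun _ : Fin d => (X : ℚ[X])) i j)
        = ((Matrix.scalar (Fin d)) ((X : ℚ[X]) ^ n)) i j := by
      by_cases hij : i = j
      · subst hij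
        simp [Matrix.scalar_apply, Matrix.diagonal_apply_eq]
      · simp [Matrix.scalar_apply, Matrix.diagonal_apply_ne _ hij, hij]
    rw [hXX, ← h1]
  rw [hcomp, hmapdet, hmat, hK, Matrix.det_mul]
  exact ⟨K.det, by rw [Matrix.charpoly, charmatrix]⟩

open Polynomial Matrix in
theorem stmt_10 {d : ℕ} (A : Matrix (Fin d) (Fin d) ℚ)
    (h : ∃ n : ℕ, 1 ≤ n ∧ n ∈ expSemigroup A) :
    ∀ k : ℕ, ∃ z : ℤ, A.charpoly.coeff k = (z : ℚ) := by
  classical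
  obtain ⟨n, hn, hmem⟩ := h
  choose z hz using hmem
  set B : Matrix (Fin d) (Fin d) ℤ := fun i j => z i j with hB
  have hBA : B.map (algebraMap ℤ ℚ) = A ^ n := by
    ext i j
    exact (hz i j).symm
  set f : ℤ[X] := (B.charpoly).comp (X ^ n) with hf
  have hfmonic : f.Monic := by
    refine (B.charpoly_monic).comp (monic_X_pow n) ?_
    simp only [natDegree_X_pow]
    omega
  have hmap : f.map (algebraMap ℤ ℚ) = ((A ^ n).charpoly).comp (X ^ n) := by
    rw [hf, Polynomial.map_comp, Polynomial.map_pow, Polynomial.map_X,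
      ← Matrix.charpoly_map, hBA]
  have hdvd : A.charpoly ∣ f.map (algebraMap ℤ ℚ) := by
    rw [hmap]
    exact charpoly_dvd_charpoly_pow_comp A n
  obtain ⟨g', hg'⟩ := IsIntegrallyClosed.eq_map_mul_C_of_dvd (K := ℚ) hfmonic hdvd
  have hlc : (A.charpoly).leadingCoeff = 1 := (A.charpoly_monic).leadingCoeff
  rw [hlc, Polynomial.C_1, mul_one] at hg'
  intro k
  refine ⟨g'.coeff k, ?_⟩
  rw [← hg', coeff_map]
  rfl
end

section
/- Let B and P be d×d integer matrices with det B = ±1 and det P ≠ 0, and let A = P B P⁻¹, a d×d rational matrix (P⁻¹ taken over ℚ). Then there exists an integer n with 1 ≤ n ≤ (det P)^(2d²) such that every entry of A^n is an integer. -/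
namespace Matrix

theorem exists_eq_smul_of_map_intCast_eq_zero {ι κ : Type*} {X : Matrix ι κ ℤ} {q : ℤ}
    (h : X.map (Int.cast : ℤ → ZMod q.natAbs) = 0) : ∃ C : Matrix ι κ ℤ, X = q • C := by
  have hdvd (i : ι) (j : κ) : q ∣ X i j :=
    Int.natAbs_dvd.mp ((ZMod.intCast_zmod_eq_zero_iff_dvd _ _).mp (congrFun₂ h i j))
  choose C hC using hdvd
  exact ⟨of C, ext hC⟩

variable {ι : Type*} [Fintype ι] [DecidableEq ι]

theorem card_square (α : Type*) [Fintype α] :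
    Fintype.card (Matrix ι ι α) = Fintype.card α ^ Fintype.card ι ^ 2 := by
  rw [Fintype.card_eq_nat_card, Matrix, Nat.card_fun, Nat.card_fun, ← pow_mul, ← sq,
    Nat.card_eq_fintype_card, Nat.card_eq_fintype_card]

theorem exists_pow_eq_one_add_smul {B : Matrix ι ι ℤ} (hB : IsUnit B.det) {q : ℤ} (hq : q ≠ 0) :
    ∃ k, 0 < k ∧ k ≤ q.natAbs ^ Fintype.card ι ^ 2 ∧ ∃ C : Matrix ι ι ℤ, B ^ k = 1 + q • C := by
  have : NeZero q.natAbs := ⟨Int.natAbs_ne_zero.mpr hq⟩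
  let f := (Int.castRingHom (ZMod q.natAbs)).mapMatrix (m := ι)
  obtain ⟨u, hu⟩ : IsUnit (f B) := by
    rw [isUnit_iff_isUnit_det, ← RingHom.map_det]
    exact hB.map _
  refine ⟨orderOf u, orderOf_pos u, ?_, ?_⟩
  · calc orderOf u ≤ Fintype.card (Matrix ι ι (ZMod q.natAbs))ˣ := orderOf_le_card_univ
      _ ≤ Fintype.card (Matrix ι ι (ZMod q.natAbs)) :=
        Fintype.card_le_of_injective _ Units.val_injective
      _ = q.natAbs ^ Fintype.card ι ^ 2 := by rw [card_square, ZMod.card]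
  · obtain ⟨C, hC⟩ := exists_eq_smul_of_map_intCast_eq_zero (X := B ^ orderOf u - 1) (q := q) <| by
      change f _ = 0
      rw [map_sub, map_pow, map_one, ← hu, ← Units.val_pow_eq_pow_val, pow_orderOf_eq_one,
        Units.val_one, sub_self]
    exact ⟨C, by rw [← hC, add_sub_cancel]⟩

theorem conj_pow {K : Type*} [Field K] (P X : Matrix ι ι K) (hP : P.det ≠ 0) (n : ℕ) :
    (P * X * P⁻¹) ^ n = P * X ^ n * P⁻¹ :=
  Units.conj_pow (nonsingInvUnit P (isUnit_iff_ne_zero.mpr hP)) X n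

theorem mul_one_add_det_smul_mul_inv {K : Type*} [Field K] (P C : Matrix ι ι K) (hP : P.det ≠ 0) :
    P * (1 + P.det • C) * P⁻¹ = 1 + P * C * P.adjugate := by
  rw [mul_add, add_mul, mul_one, mul_nonsing_inv _ (isUnit_iff_ne_zero.mpr hP), inv_def,
    Ring.inverse_eq_inv', Matrix.mul_smul, Matrix.mul_smul, Matrix.smul_mul, smul_smul,
    inv_mul_cancel₀ hP, one_smul]

theorem map_mul_one_add_det_smul_mul_inv {R K : Type*} [CommRing R] [Field K] (f : R →+* K)
    (P C : Matrix ι ι R) (hP : f P.det ≠ 0) :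
    P.map f * (1 + P.det • C).map f * (P.map f)⁻¹ = (1 + P * C * P.adjugate).map f := by
  have hdet : (P.map f).det = f P.det := (f.map_det P).symm
  have hadj : (P.map f).adjugate = P.adjugate.map f := (f.map_adjugate P).symm
  have key := mul_one_add_det_smul_mul_inv (P.map f) (C.map f) (hdet ▸ hP)
  rw [hdet, hadj] at key
  simpa [Matrix.map_add, Matrix.map_smul', Matrix.map_mul] using key

end Matrix

theorem mem_expSemigroup_of_pow_eq_map {ι : Type*} [Fintype ι] [DecidableEq ι]
    {A : Matrix ι ι ℚ} {n : ℕ} {Z : Matrix ι ι ℤ} (h : A ^ n = Z.map (Int.cast : ℤ → ℚ)) :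
    n ∈ expSemigroup A :=
  fun i j => ⟨Z i j, by rw [h, Matrix.map_apply]⟩

theorem stmt_12 {d : ℕ} (B P : Matrix (Fin d) (Fin d) ℤ)
    (hB : B.det = 1 ∨ B.det = -1) (hP : P.det ≠ 0)
    (A : Matrix (Fin d) (Fin d) ℚ)
    (hA : A = P.map (Int.cast : ℤ → ℚ) * B.map (Int.cast : ℤ → ℚ) *
      (P.map (Int.cast : ℤ → ℚ))⁻¹) :
    ∃ n : ℕ, 1 ≤ n ∧ (n : ℤ) ≤ P.det ^ (2 * d ^ 2) ∧ n ∈ expSemigroup A := by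
  obtain ⟨n, hn_pos, hn_le, C, hBn⟩ := B.exists_pow_eq_one_add_smul (Int.isUnit_iff.mpr hB) hP
  rw [Fintype.card_fin] at hn_le
  refine ⟨n, hn_pos, ?_, ?_⟩
  · calc (n : ℤ) ≤ |P.det| ^ d ^ 2 := by rw [← Int.natCast_natAbs]; exact_mod_cast hn_le
      _ ≤ |P.det| ^ (2 * d ^ 2) := pow_le_pow_right₀ (Int.one_le_abs hP) (by omega)
      _ = P.det ^ (2 * d ^ 2) := (even_two_mul _).pow_abs _
  · let f := Int.castRingHom ℚ
    have hP' : f P.det ≠ 0 := by simpa [f] using hP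
    have hdet : (P.map f).det ≠ 0 := by rwa [← RingHom.mapMatrix_apply, ← f.map_det]
    have hmap : B.map f ^ n = (B ^ n).map f := (map_pow f.mapMatrix B n).symm
    refine mem_expSemigroup_of_pow_eq_map (Z := 1 + P * C * P.adjugate) ?_
    subst hA
    change (P.map f * B.map f * (P.map f)⁻¹) ^ n = _
    rw [Matrix.conj_pow _ _ hdet, hmap, hBn]
    exact Matrix.map_mul_one_add_det_smul_mul_inv f P C hP'
end

section
/- Let A be a d×d rational matrix with det A = 1 or det A = −1. Then S(A) is cyclic: there exists m ∈ ℕ such that S(A) = {m·k : k ∈ ℕ}. Moreover, S(A) ≠ {0} if and only if the characteristic polynomial of A has integer coefficients. -/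
open Polynomial Matrix

namespace Stmt13Aux


lemma natCyclic (S : Set ℕ) (h0 : 0 ∈ S)
    (hadd : ∀ a ∈ S, ∀ b ∈ S, a + b ∈ S)
    (hsub : ∀ a ∈ S, ∀ b ∈ S, a ≤ b → b - a ∈ S) :
    ∃ m : ℕ, S = {n : ℕ | ∃ k : ℕ, n = m * k} := by
  by_cases hS : ∀ n ∈ S, n = 0
  · refine ⟨0, ?_⟩
    ext n
    simp only [Set.mem_setOf_eq, zero_mul]
    constructor
    · intro hn; exact ⟨0, hS n hn⟩
    · rintro ⟨k, rfl⟩; exact h0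
  · push_neg at hS
    obtain ⟨n0, hn0, hn0'⟩ := hS
    have hex : ∃ n, n ∈ S ∧ n ≠ 0 := ⟨n0, hn0, hn0'⟩
    classical
    set m := Nat.find hex with hm
    obtain ⟨hmS, hm0⟩ := Nat.find_spec hex
    refine ⟨m, ?_⟩
    have key : ∀ n, n ∈ S → ∃ k, n = m * k := by
      intro n
      induction n using Nat.strong_induction_on with
      | _ n ih =>
        intro hn
        rcases Nat.eq_zero_or_pos n with rfl | hpos
        · exact ⟨0, by simp⟩
        · have hle : m ≤ n := by
            by_contra hlt
            push_neg at hlt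
            exact (Nat.find_min hex hlt) ⟨hn, by omega⟩
          have hsubS : n - m ∈ S := hsub m hmS n hn hle
          have hlt : n - m < n := Nat.sub_lt hpos (Nat.pos_of_ne_zero hm0)
          obtain ⟨k, hk⟩ := ih (n - m) hlt hsubS
          exact ⟨k + 1, by rw [Nat.mul_succ]; omega⟩
    ext n
    simp only [Set.mem_setOf_eq]
    constructor
    · exact key n
    · rintro ⟨k, rfl⟩
      induction k with
      | zero => simpa using h0
      | succ k ihk =>
        have : m * (k + 1) = m * k + m := by ring
        rw [this]
        exact hadd _ ihk _ hmS

variable {d : ℕ}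

def IsIntM (M : Matrix (Fin d) (Fin d) ℚ) : Prop :=
  ∀ i j, M i j ∈ (⊥ : Subring ℚ)

lemma isIntM_iff (M : Matrix (Fin d) (Fin d) ℚ) :
    IsIntM M ↔ ∀ i j, ∃ z : ℤ, M i j = (z : ℚ) := by
  unfold IsIntM
  refine forall₂_congr fun i j => ?_
  rw [Subring.mem_bot]
  exact ⟨fun ⟨z, h⟩ => ⟨z, h.symm⟩, fun ⟨z, h⟩ => ⟨z, h.symm⟩⟩

lemma isIntM_one : IsIntM (1 : Matrix (Fin d) (Fin d) ℚ) := by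
  intro i j
  rw [Matrix.one_apply]
  split
  exacts [one_mem _, zero_mem _]

lemma isIntM_mul {M N : Matrix (Fin d) (Fin d) ℚ} (hM : IsIntM M) (hN : IsIntM N) :
    IsIntM (M * N) := by
  intro i j
  rw [Matrix.mul_apply]
  exact Subring.sum_mem _ fun k _ => mul_mem (hM i k) (hN k j)

lemma isIntM_det {M : Matrix (Fin d) (Fin d) ℚ} (hM : IsIntM M) :
    M.det ∈ (⊥ : Subring ℚ) := by
  rw [Matrix.det_apply']
  refine Subring.sum_mem _ fun σ _ => mul_mem ?_ (Subring.prod_mem _ fun i _ => hM _ i)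
  rcases Int.units_eq_one_or (Equiv.Perm.sign σ) with h | h
  · simp only [h, Units.val_one, Int.cast_one]; exact one_mem _
  · simp only [h, Units.val_neg, Units.val_one, Int.cast_neg, Int.cast_one]
    exact neg_mem (one_mem _)

lemma isIntM_adjugate {M : Matrix (Fin d) (Fin d) ℚ} (hM : IsIntM M) :
    IsIntM M.adjugate := by
  intro i j
  rw [Matrix.adjugate_apply]
  apply isIntM_det
  intro a b
  rw [Matrix.updateRow_apply]
  split
  · rcases eq_or_ne b i with rfl | hb
    · simp only [Pi.single_eq_same]; exact one_mem _
    · rw [Pi.single_eq_of_ne hb]; exact zero_mem _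
  · exact hM a b

lemma isIntM_inv {M : Matrix (Fin d) (Fin d) ℚ} (hM : IsIntM M)
    (hdet : M.det = 1 ∨ M.det = -1) : IsIntM M⁻¹ := by
  have hadj := isIntM_adjugate hM
  rcases hdet with h1 | h1
  · rw [Matrix.inv_def, h1]
    simpa using hadj
  · rw [Matrix.inv_def, h1]
    intro i j
    simp only [Ring.inverse_eq_inv']
    rw [Matrix.smul_apply]
    simp only [inv_neg, inv_one, neg_smul, one_smul]
    exact neg_mem (hadj i j)




lemma charpoly_dvd_comp (A : Matrix (Fin d) (Fin d) ℚ) (n : ℕ) :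
    A.charpoly ∣ ((A ^ n).charpoly).comp (X ^ n) := by
  classical
  set φ : ℚ[X] →+* ℚ[X] := eval₂RingHom C (X ^ n) with hφ
  have hcomp : ((A ^ n).charpoly).comp (X ^ n) = φ ((A ^ n).charpoly) := rfl
  rw [hcomp, Matrix.charpoly, Matrix.charpoly, RingHom.map_det]
  have h2 : (charmatrix (A ^ n)).map φ =
      Matrix.scalar (Fin d) ((X : ℚ[X]) ^ n) - (C : ℚ →+* ℚ[X]).mapMatrix (A ^ n) := by
    ext i j
    by_cases hij : i = j
    · subst hij
      simp [charmatrix_apply, Matrix.map_apply, Matrix.diagonal_apply_eq,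
        RingHom.mapMatrix_apply, Matrix.sub_apply, Matrix.scalar_apply, φ]
    · simp [charmatrix_apply, Matrix.map_apply, Matrix.diagonal_apply_ne _ hij,
        RingHom.mapMatrix_apply, Matrix.sub_apply, Matrix.scalar_apply,
        Matrix.diagonal_apply_ne _ hij, φ]
  rw [RingHom.mapMatrix_apply, h2]
  have hx : Commute (Matrix.scalar (Fin d) (X : ℚ[X]))
      ((C : ℚ →+* ℚ[X]).mapMatrix A) :=
    Matrix.scalar_commute _ (fun r => Commute.all _ _) _
  have hgeom := hx.geom_sum₂_mul n
  have hxpow : (Matrix.scalar (Fin d) (X : ℚ[X])) ^ n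
      = Matrix.scalar (Fin d) ((X : ℚ[X]) ^ n) := by rw [map_pow]
  have hypow : ((C : ℚ →+* ℚ[X]).mapMatrix A) ^ n
      = (C : ℚ →+* ℚ[X]).mapMatrix (A ^ n) := by rw [map_pow]
  rw [hxpow, hypow] at hgeom
  rw [← hgeom]
  have hch : charmatrix A =
      Matrix.scalar (Fin d) (X : ℚ[X]) - (C : ℚ →+* ℚ[X]).mapMatrix A := rfl
  rw [Matrix.det_mul]
  have : A.charmatrix.det ∣ (Matrix.scalar (Fin d) (X : ℚ[X]) - (C : ℚ →+* ℚ[X]).mapMatrix A).det := by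
    rw [← hch]
  exact Dvd.dvd.mul_left this _

lemma charpoly_int_of_pow {n : ℕ} (A : Matrix (Fin d) (Fin d) ℚ) (hn : n ≠ 0)
    (h : ∀ i j, ∃ z : ℤ, (A ^ n) i j = (z : ℚ)) :
    ∀ k, ∃ z : ℤ, A.charpoly.coeff k = (z : ℚ) := by
  classical
  choose z hz using h
  set B : Matrix (Fin d) (Fin d) ℤ := Matrix.of z with hBdef
  have hB : B.map ((Int.castRingHom ℚ) : ℤ → ℚ) = A ^ n := by
    ext i j
    exact (hz i j).symm
  have hmonic : (B.charpoly.comp (X ^ n)).Monic := by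
    refine (Matrix.charpoly_monic B).comp (monic_X_pow n) ?_
    simpa [natDegree_X_pow] using hn
  have hdvd : A.charpoly ∣ (B.charpoly.comp (X ^ n)).map (algebraMap ℤ ℚ) := by
    have : (B.charpoly.comp (X ^ n)).map (algebraMap ℤ ℚ)
        = ((A ^ n).charpoly).comp (X ^ n) := by
      rw [Polynomial.map_comp, Polynomial.map_pow, Polynomial.map_X]
      congr 1
      rw [← hB, Matrix.charpoly_map]
      rfl
    rw [this]
    exact charpoly_dvd_comp A n
  obtain ⟨g, hg⟩ := IsIntegrallyClosed.eq_map_mul_C_of_dvd (R := ℤ) (K := ℚ) hmonic hdvd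
  rw [(Matrix.charpoly_monic A).leadingCoeff, Polynomial.C_1, mul_one] at hg
  intro k
  refine ⟨g.coeff k, ?_⟩
  rw [← hg, Polynomial.coeff_map]
  simp




lemma exists_pow_int (A : Matrix (Fin d) (Fin d) ℚ)
    (hdet : A.det = 1 ∨ A.det = -1)
    (hc : ∀ k, ∃ z : ℤ, A.charpoly.coeff k = (z : ℚ)) :
    ∃ n : ℕ, n ≠ 0 ∧ ∀ i j, ∃ z : ℤ, (A ^ n) i j = (z : ℚ) := by
  classical
  rcases Nat.eq_zero_or_pos d with rfl | hd
  · exact ⟨1, one_ne_zero, fun i _ => i.elim0⟩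
  obtain ⟨e, rfl⟩ : ∃ e, d = e + 1 := ⟨d - 1, by omega⟩
  have hA : IsUnit A.det := by
    rcases hdet with h | h <;> rw [h]
    · exact isUnit_one
    · exact isUnit_one.neg
  -- lift charpoly to ℤ
  obtain ⟨p, hpmap, hpm⟩ : ∃ p : ℤ[X], p.map (Int.castRingHom ℚ) = A.charpoly ∧ p.Monic := by
    have hl : A.charpoly ∈ Polynomial.lifts (Int.castRingHom ℚ) := by
      rw [lifts_iff_coeff_lifts]
      intro k
      obtain ⟨z, hz⟩ := hc k
      exact ⟨z, hz.symm⟩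
    obtain ⟨q, h1, _, h3⟩ := lifts_and_degree_eq_and_monic hl (Matrix.charpoly_monic A)
    exact ⟨q, h1, h3⟩
  have hnd : p.natDegree = e + 1 := by
    have h1 : (p.map (Int.castRingHom ℚ)).natDegree = e + 1 := by
      rw [hpmap, Matrix.charpoly_natDegree_eq_dim, Fintype.card_fin]
    rwa [hpm.natDegree_map] at h1
  set c : ℕ → ℤ := fun i => p.coeff i with hcdef
  -- Cayley–Hamilton with integer coefficients
  have hCH : A ^ (e + 1) + ∑ i ∈ Finset.range (e + 1), ((c i : ℚ)) • A ^ i = 0 := by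
    have h0 : (Polynomial.aeval A) A.charpoly = 0 := Matrix.aeval_self_charpoly A
    rw [← hpmap, hpm.as_sum, hnd] at h0
    simpa [Polynomial.map_add, Polynomial.map_pow, Polynomial.map_sum, Polynomial.map_mul,
      map_sum, map_pow, _root_.map_mul, aeval_C, Algebra.smul_def] using h0
  -- the ℤ-span of the small powers of A
  set L : Submodule ℤ (Matrix (Fin (e + 1)) (Fin (e + 1)) ℚ) :=
    Submodule.span ℤ (Set.range fun i : Fin (e + 1) => A ^ (i : ℕ)) with hL
  have hgen : ∀ i : ℕ, i < e + 1 → A ^ i ∈ L :=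
    fun i hi => Submodule.subset_span ⟨⟨i, hi⟩, rfl⟩
  have hone : (1 : Matrix (Fin (e + 1)) (Fin (e + 1)) ℚ) ∈ L := by
    have := hgen 0 (by omega); rwa [pow_zero] at this
  have hsmul : ∀ (z : ℤ) (M : Matrix (Fin (e+1)) (Fin (e+1)) ℚ),
      M ∈ L → ((z : ℚ)) • M ∈ L := by
    intro z M hM
    rw [Int.cast_smul_eq_zsmul]
    exact L.smul_mem z hM
  have hAd : A ^ (e + 1) ∈ L := by
    have hrel : A ^ (e + 1) = ∑ i ∈ Finset.range (e + 1), (((-(c i) : ℤ) : ℚ)) • A ^ i := by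
      have h1 : A ^ (e+1) = -∑ i ∈ Finset.range (e + 1), ((c i : ℚ)) • A ^ i :=
        eq_neg_of_add_eq_zero_left hCH
      rw [h1, ← Finset.sum_neg_distrib]
      refine Finset.sum_congr rfl fun i _ => ?_
      push_cast
      rw [neg_smul]
    rw [hrel]
    exact Submodule.sum_mem _ fun i hi => hsmul _ _ (hgen i (Finset.mem_range.mp hi))
  have hmulA : ∀ M ∈ L, A * M ∈ L := by
    intro M hM
    have hle : L ≤ L.comap (LinearMap.mulLeft ℤ A) := by
      rw [hL, Submodule.span_le]
      rintro _ ⟨i, rfl⟩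
      simp only [SetLike.mem_coe, Submodule.mem_comap, LinearMap.mulLeft_apply]
      rw [← pow_succ']
      rcases Nat.lt_or_ge ((i : ℕ) + 1) (e + 1) with h | h
      · exact hgen _ h
      · have : (i : ℕ) + 1 = e + 1 := by omega
        rw [this]; exact hAd
    exact hle hM
  -- the inverse of A lies in L as well
  have hsq : (c 0 : ℚ) * (c 0 : ℚ) = 1 := by
    have h1 := Matrix.det_eq_sign_charpoly_coeff A
    have h2 : A.charpoly.coeff 0 = (c 0 : ℚ) := by
      rw [← hpmap, Polynomial.coeff_map]; simp [hcdef]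
    have hdd : A.det * A.det = 1 := by rcases hdet with h | h <;> rw [h] <;> norm_num
    rw [h1, h2, Fintype.card_fin] at hdd
    calc (c 0 : ℚ) * (c 0 : ℚ)
        = ((-1 : ℚ) ^ (e+1) * (c 0 : ℚ)) * ((-1 : ℚ) ^ (e+1) * (c 0 : ℚ)) := by
          rw [mul_mul_mul_comm, ← mul_pow]; norm_num
      _ = 1 := hdd
  set N : Matrix (Fin (e + 1)) (Fin (e + 1)) ℚ :=
    (-(c 0 : ℚ)) • (A ^ e + ∑ i ∈ Finset.range e, ((c (i + 1) : ℚ)) • A ^ i) with hNdef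
  have hAN : A * N = 1 := by
    have hCH' : A ^ (e + 1) + ∑ i ∈ Finset.range e, ((c (i+1) : ℚ)) • A ^ (i+1)
        = -((c 0 : ℚ) • (1 : Matrix (Fin (e+1)) (Fin (e+1)) ℚ)) := by
      have := hCH
      rw [Finset.sum_range_succ'] at this
      rw [pow_zero] at this
      have h' : (A ^ (e+1) + ∑ i ∈ Finset.range e, ((c (i+1) : ℚ)) • A ^ (i+1))
          + (c 0 : ℚ) • (1 : Matrix (Fin (e+1)) (Fin (e+1)) ℚ) = 0 := by
        rw [add_assoc]; exact this
      exact eq_neg_of_add_eq_zero_left h'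
    have hmul : A * (A ^ e + ∑ i ∈ Finset.range e, ((c (i + 1) : ℚ)) • A ^ i)
        = A ^ (e + 1) + ∑ i ∈ Finset.range e, ((c (i+1) : ℚ)) • A ^ (i+1) := by
      rw [mul_add, Finset.mul_sum]
      congr 1
      · rw [← pow_succ']
      · exact Finset.sum_congr rfl fun i _ => by rw [mul_smul_comm, ← pow_succ']
    rw [hNdef, mul_smul_comm, hmul, hCH', smul_neg, neg_smul, neg_neg, smul_smul, hsq, one_smul]
  have hNL : N ∈ L := by
    have hcast : (((-(c 0)) : ℤ) : ℚ) = -(c 0 : ℚ) := by push_cast; ring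
    rw [hNdef, ← hcast]
    refine hsmul _ _ (Submodule.add_mem _ (hgen e (by omega)) (Submodule.sum_mem _ ?_))
    intro i hi
    exact hsmul _ _ (hgen i (by have := Finset.mem_range.mp hi; omega))
  have hBN : A⁻¹ = N := Matrix.inv_eq_right_inv hAN
  have hBL : A⁻¹ ∈ L := by rw [hBN]; exact hNL
  have hmulB : ∀ M ∈ L, A⁻¹ * M ∈ L := by
    intro M hM
    have hle : L ≤ L.comap (LinearMap.mulLeft ℤ A⁻¹) := by
      rw [hL, Submodule.span_le]
      rintro _ ⟨i, rfl⟩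
      simp only [SetLike.mem_coe, Submodule.mem_comap, LinearMap.mulLeft_apply]
      rcases Nat.eq_zero_or_pos (i : ℕ) with h0 | h0
      · rw [h0, pow_zero, mul_one]; exact hBL
      · obtain ⟨j, hj⟩ : ∃ j, (i : ℕ) = j + 1 := ⟨(i : ℕ) - 1, by omega⟩
        rw [hj, pow_succ', ← mul_assoc, Matrix.nonsing_inv_mul A hA, one_mul]
        exact hgen j (by have := i.isLt; omega)
    exact hle hM
  have hApow : ∀ n : ℕ, A ^ n ∈ L := by
    intro n
    induction n with
    | zero => rw [pow_zero]; exact hone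
    | succ n ih => rw [pow_succ']; exact hmulA _ ih
  have hBpow : ∀ n : ℕ, (A⁻¹) ^ n ∈ L := by
    intro n
    induction n with
    | zero => rw [pow_zero]; exact hone
    | succ n ih => rw [pow_succ']; exact hmulB _ ih
  -- a common denominator for everything in L
  set D : ℕ := ∏ i : Fin (e+1), ∏ a : Fin (e+1), ∏ b : Fin (e+1), ((A ^ (i : ℕ)) a b).den
    with hDdef
  have hD : D ≠ 0 := by
    rw [hDdef]
    refine Finset.prod_ne_zero_iff.mpr fun i _ => ?_
    refine Finset.prod_ne_zero_iff.mpr fun a _ => ?_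
    exact Finset.prod_ne_zero_iff.mpr fun b _ => ((A ^ (i : ℕ)) a b).den_pos.ne'
  have hden : ∀ i a b : Fin (e+1), ((A ^ (i : ℕ)) a b).den ∣ D := by
    intro i a b
    have h1 : ((A ^ (i : ℕ)) a b).den ∣ ∏ b' : Fin (e+1), ((A ^ (i : ℕ)) a b').den :=
      Finset.dvd_prod_of_mem _ (Finset.mem_univ b)
    have h2 : (∏ b' : Fin (e+1), ((A ^ (i : ℕ)) a b').den)
        ∣ ∏ a' : Fin (e+1), ∏ b' : Fin (e+1), ((A ^ (i : ℕ)) a' b').den :=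
      Finset.dvd_prod_of_mem _ (Finset.mem_univ a)
    have h3 : (∏ a' : Fin (e+1), ∏ b' : Fin (e+1), ((A ^ (i : ℕ)) a' b').den)
        ∣ ∏ i' : Fin (e+1), ∏ a' : Fin (e+1), ∏ b' : Fin (e+1), ((A ^ (i' : ℕ)) a' b').den :=
      Finset.dvd_prod_of_mem _ (Finset.mem_univ i)
    rw [hDdef]
    exact dvd_trans (dvd_trans h1 h2) h3
  have hq : ∀ q : ℚ, q.den ∣ D → ∃ z : ℤ, (D : ℚ) * q = (z : ℚ) := by
    intro q hdvd
    obtain ⟨k, hk⟩ := hdvd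
    refine ⟨(k : ℤ) * q.num, ?_⟩
    have h1 : (q.den : ℚ) * q = (q.num : ℚ) := by
      rw [mul_comm]; exact_mod_cast Rat.mul_den_eq_num q
    rw [hk]
    push_cast
    rw [mul_comm ((q.den : ℚ)) ((k : ℚ)), mul_assoc, h1]
  have hLD : ∀ M ∈ L, ∀ a b, ∃ z : ℤ, (D : ℚ) * M a b = (z : ℚ) := by
    intro M hM
    let T : Submodule ℤ (Matrix (Fin (e+1)) (Fin (e+1)) ℚ) :=
      { carrier := {M | ∀ a b, ∃ z : ℤ, (D : ℚ) * M a b = (z : ℚ)}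
        zero_mem' := fun a b => ⟨0, by simp⟩
        add_mem' := by
          intro x y hx hy a b
          obtain ⟨z1, h1⟩ := hx a b
          obtain ⟨z2, h2⟩ := hy a b
          exact ⟨z1 + z2, by rw [Matrix.add_apply, mul_add, h1, h2]; push_cast; ring⟩
        smul_mem' := by
          intro z M hM a b
          obtain ⟨w, hw⟩ := hM a b
          refine ⟨z * w, ?_⟩
          rw [Matrix.smul_apply, zsmul_eq_mul, mul_left_comm, hw]
          push_cast
          ring }
    have hLT : L ≤ T := by
      rw [hL, Submodule.span_le]
      rintro _ ⟨i, rfl⟩ a b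
      exact hq _ (hden i a b)
    exact hLT hM
  choose g hg using fun (n : ℕ) => hLD _ (hApow n)
  choose g' hg' using fun (n : ℕ) => hLD _ (hBpow n)
  -- pigeonhole
  haveI : NeZero (D * D) := ⟨Nat.mul_ne_zero hD hD⟩
  obtain ⟨m, n, hlt, hfe⟩ : ∃ m n : ℕ, n < m ∧
      ∀ a b, ((g m a b : ZMod (D * D))) = ((g n a b : ZMod (D * D))) := by
    obtain ⟨m, n, hmn, hfe⟩ := Finite.exists_ne_map_eq_of_infinite
      (fun (k : ℕ) => ((fun a b => ((g k a b : ZMod (D * D)))) :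
        Fin (e+1) → Fin (e+1) → ZMod (D * D)))
    rcases lt_or_gt_of_ne hmn with h | h
    · exact ⟨n, m, h, fun a b => (congrFun (congrFun hfe a) b).symm⟩
    · exact ⟨m, n, h, fun a b => congrFun (congrFun hfe a) b⟩
  have hdiv : ∀ a b, ∃ u : ℤ, g m a b - g n a b = ((D * D : ℕ) : ℤ) * u := by
    intro a b
    have h1 := (ZMod.intCast_eq_intCast_iff _ _ _).mp (hfe a b)
    obtain ⟨u, hu⟩ := Int.ModEq.dvd h1
    exact ⟨-u, by rw [mul_neg, ← hu]; ring⟩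
  refine ⟨m - n, by omega, ?_⟩
  have hpowinv : ∀ k : ℕ, (A⁻¹) ^ k * A ^ k = 1 := by
    intro k
    induction k with
    | zero => simp
    | succ k ih =>
      rw [pow_succ, pow_succ' A, mul_assoc, ← mul_assoc A⁻¹ A (A ^ k),
        Matrix.nonsing_inv_mul A hA, one_mul, ih]
  have hkey : A ^ (m - n) = (A⁻¹) ^ n * A ^ m := by
    calc A ^ (m - n) = 1 * A ^ (m - n) := (one_mul _).symm
      _ = ((A⁻¹) ^ n * A ^ n) * A ^ (m - n) := by rw [hpowinv n]
      _ = (A⁻¹) ^ n * (A ^ n * A ^ (m - n)) := mul_assoc _ _ _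
      _ = (A⁻¹) ^ n * A ^ m := by rw [← pow_add, show n + (m - n) = m by omega]
  intro a b
  have hentry : (A ^ (m - n)) a b
      = (1 : Matrix (Fin (e+1)) (Fin (e+1)) ℚ) a b
        + ∑ k, ((A⁻¹) ^ n) a k * ((A ^ m) k b - (A ^ n) k b) := by
    rw [hkey, Matrix.mul_apply, ← hpowinv n, Matrix.mul_apply, ← Finset.sum_add_distrib]
    exact Finset.sum_congr rfl fun k _ => by ring
  have hterm : ∀ k : Fin (e+1), ∃ z : ℤ,
      ((A⁻¹) ^ n) a k * ((A ^ m) k b - (A ^ n) k b) = (z : ℚ) := by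
    intro k
    obtain ⟨u, hu⟩ := hdiv k b
    refine ⟨g' n a k * u, ?_⟩
    have hD0 : ((D : ℚ)) ≠ 0 := Nat.cast_ne_zero.mpr hD
    apply mul_left_cancel₀ (mul_ne_zero hD0 hD0)
    calc (D : ℚ) * (D : ℚ) * (((A⁻¹) ^ n) a k * ((A ^ m) k b - (A ^ n) k b))
        = ((D : ℚ) * ((A⁻¹) ^ n) a k) * ((D : ℚ) * (A ^ m) k b - (D : ℚ) * (A ^ n) k b) := by
          ring
      _ = (g' n a k : ℚ) * ((g m k b : ℚ) - (g n k b : ℚ)) := by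
          rw [hg' n a k, hg m k b, hg n k b]
      _ = (g' n a k : ℚ) * (((D * D : ℕ) : ℤ) * u : ℤ) := by
          rw [← hu]; push_cast; ring
      _ = (D : ℚ) * (D : ℚ) * ((g' n a k * u : ℤ) : ℚ) := by push_cast; ring
  choose zf hzf using hterm
  refine ⟨(if a = b then 1 else 0) + ∑ k, zf k, ?_⟩
  rw [hentry, Matrix.one_apply]
  have hsum : (∑ k, ((A⁻¹) ^ n) a k * ((A ^ m) k b - (A ^ n) k b))
      = ((∑ k, zf k : ℤ) : ℚ) := by
    rw [Finset.sum_congr rfl fun k _ => hzf k]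
    push_cast
    ring
  rw [hsum]
  split <;> push_cast <;> ring


end Stmt13Aux

theorem stmt_13 {d : ℕ} (A : Matrix (Fin d) (Fin d) ℚ)
    (hdet : A.det = 1 ∨ A.det = -1) :
    (∃ m : ℕ, expSemigroup A = {n : ℕ | ∃ k : ℕ, n = m * k}) ∧
    (expSemigroup A ≠ {0} ↔ ∀ k : ℕ, ∃ z : ℤ, A.charpoly.coeff k = (z : ℚ)) := by
  classical
  open Stmt13Aux in
  have hmem : ∀ n : ℕ, n ∈ expSemigroup A ↔ IsIntM (A ^ n) := by
    intro n
    rw [isIntM_iff]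
    rfl
  have hdetpow : ∀ a : ℕ, (A ^ a).det = 1 ∨ (A ^ a).det = -1 := by
    intro a
    rw [Matrix.det_pow]
    rcases hdet with h | h <;> rw [h]
    · left; exact one_pow a
    · rcases Nat.even_or_odd a with he | he
      · left; exact he.neg_one_pow
      · right; exact he.neg_one_pow
  have hA : IsUnit A.det := by
    rcases hdet with h | h <;> rw [h]
    · exact isUnit_one
    · exact isUnit_one.neg
  have h0 : 0 ∈ expSemigroup A := by
    rw [hmem, pow_zero]
    exact isIntM_one
  have hadd : ∀ a ∈ expSemigroup A, ∀ b ∈ expSemigroup A, a + b ∈ expSemigroup A := by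
    intro a ha b hb
    rw [hmem] at ha hb ⊢
    rw [pow_add]
    exact isIntM_mul ha hb
  have hsub : ∀ a ∈ expSemigroup A, ∀ b ∈ expSemigroup A, a ≤ b →
      b - a ∈ expSemigroup A := by
    intro a ha b hb hab
    rw [hmem] at ha hb ⊢
    have hu : IsUnit (A ^ a).det := by rw [Matrix.det_pow]; exact hA.pow a
    have hid : A ^ (b - a) = A ^ b * (A ^ a)⁻¹ := by
      calc A ^ (b - a) = A ^ (b - a) * (A ^ a * (A ^ a)⁻¹) := by
            rw [Matrix.mul_nonsing_inv _ hu, mul_one]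
        _ = (A ^ (b - a) * A ^ a) * (A ^ a)⁻¹ := by rw [mul_assoc]
        _ = A ^ b * (A ^ a)⁻¹ := by rw [← pow_add, Nat.sub_add_cancel hab]
    rw [hid]
    exact isIntM_mul hb (isIntM_inv ha (hdetpow a))
  constructor
  · exact natCyclic _ h0 hadd hsub
  · constructor
    · intro hne
      have hex : ∃ n ∈ expSemigroup A, n ≠ 0 := by
        by_contra hcon
        push_neg at hcon
        apply hne
        ext n
        simp only [Set.mem_singleton_iff]
        exact ⟨fun hn => hcon n hn, fun hn => hn ▸ h0⟩
      obtain ⟨n, hn, hn0⟩ := hex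
      exact charpoly_int_of_pow A hn0 hn
    · intro hcoeff
      obtain ⟨n, hn0, hint⟩ := exists_pow_int A hdet hcoeff
      intro hS
      have : n ∈ expSemigroup A := hint
      rw [hS] at this
      exact hn0 this
end

section
/- Let A be a d×d rational matrix whose characteristic polynomial equals (the image in ℚ[x] of) the n-th cyclotomic polynomial for some n ≥ 1. Then S(A) ≠ {0} and S(A) is cyclic, i.e., there exists m ∈ ℕ, m ≥ 1, such that S(A) = {m·k : k ∈ ℕ}. -/
/-! By Cayley–Hamilton `A ^ n = 1`, so `A` has finite order. For an element `a` of finite order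
`o` in a monoid and a submonoid `R`, the exponents `k` with `a ^ k ∈ R` are closed under addition
and under subtraction, since `a ^ (j - i) = a ^ j * (a ^ i) ^ (o - 1)`; such a set of natural
numbers consists of the multiples of its least positive element. Here `R` is the submonoid of
integer matrices. -/

theorem Nat.exists_eq_setOf_dvd_of_sub_mem {S : Set ℕ}
    (hadd : ∀ {i j}, i ∈ S → j ∈ S → i + j ∈ S)
    (hsub : ∀ {i j}, i ∈ S → j ∈ S → i ≤ j → j - i ∈ S) (hpos : ∃ k, 0 < k ∧ k ∈ S) :
    ∃ m, 0 < m ∧ S = {k | m ∣ k} := by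
  classical
  obtain ⟨hm0, hmS⟩ := Nat.find_spec hpos
  set m := Nat.find hpos
  have hmul : ∀ k, m * k ∈ S := by
    intro k
    induction k with
    | zero => simpa using hsub hmS hmS le_rfl
    | succ k ih => simpa [Nat.mul_succ] using hadd ih hmS
  refine ⟨m, hm0, Set.ext fun s => ⟨fun hs => ?_, fun ⟨k, hk⟩ => hk ▸ hmul k⟩⟩
  have hmod : s % m ∈ S := by
    rw [Nat.mod_eq_sub_mul_div]
    exact hsub (hmul _) hs (Nat.mul_div_le s m)
  by_contra hdvd
  have hmod0 : 0 < s % m := Nat.pos_of_ne_zero fun h => hdvd (Nat.dvd_of_mod_eq_zero h)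
  exact absurd (Nat.find_min' hpos ⟨hmod0, hmod⟩) (not_le.mpr (Nat.mod_lt s hm0))

theorem IsOfFinOrder.exists_setOf_pow_mem_eq_setOf_dvd {M : Type*} [Monoid M] {a : M}
    (ha : IsOfFinOrder a) (R : Submonoid M) :
    ∃ m, 0 < m ∧ {k | a ^ k ∈ R} = {k | m ∣ k} := by
  have ho := ha.orderOf_pos
  refine Nat.exists_eq_setOf_dvd_of_sub_mem (fun hi hj => ?_) (fun {i j} hi hj hij => ?_)
    ⟨orderOf a, ho, by simp [pow_orderOf_eq_one, R.one_mem]⟩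
  · simpa [pow_add] using R.mul_mem hi hj
  · have hpow : a ^ (j - i) = a ^ j * (a ^ i) ^ (orderOf a - 1) := by
      calc a ^ (j - i) = a ^ (j - i) * (a ^ orderOf a) ^ i := by simp [pow_orderOf_eq_one]
        _ = a ^ (j + i * (orderOf a - 1)) := by
          rw [← pow_mul, ← pow_add]
          congr 1
          zify [hij, ho]
          ring
        _ = a ^ j * (a ^ i) ^ (orderOf a - 1) := by rw [pow_add, pow_mul]
    simpa only [Set.mem_ofPred_eq, hpow] using R.mul_mem hj (R.pow_mem hi _)

theorem Matrix.pow_eq_one_of_charpoly_dvd {ι R : Type*} [Fintype ι] [DecidableEq ι]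
    [CommRing R] {A : Matrix ι ι R} {n : ℕ} (h : A.charpoly ∣ Polynomial.X ^ n - 1) :
    A ^ n = 1 := by
  obtain ⟨q, hq⟩ := h
  have h0 : Polynomial.aeval A (Polynomial.X ^ n - 1 : Polynomial R) = 0 := by
    rw [hq, map_mul, Matrix.aeval_self_charpoly, zero_mul]
  simpa [sub_eq_zero] using h0

theorem expSemigroup_eq_setOf_pow_mem {ι : Type*} [Fintype ι] [DecidableEq ι]
    (A : Matrix ι ι ℚ) :
    expSemigroup A = {k | A ^ k ∈ MonoidHom.mrange (Int.castRingHom ℚ).mapMatrix} := by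
  ext k
  simp only [expSemigroup, Set.mem_ofPred_eq, MonoidHom.mem_mrange]
  constructor
  · intro h
    choose B hB using h
    exact ⟨Matrix.of B, Matrix.ext fun i j => (hB i j).symm⟩
  · rintro ⟨B, hB⟩ i j
    exact ⟨B i j, by rw [← hB]; rfl⟩

theorem stmt_14 {d : ℕ} (A : Matrix (Fin d) (Fin d) ℚ) (n : ℕ) (hn : 1 ≤ n)
    (hA : A.charpoly = (Polynomial.cyclotomic n ℤ).map (Int.castRingHom ℚ)) :
    expSemigroup A ≠ {0} ∧
    ∃ m : ℕ, 1 ≤ m ∧ expSemigroup A = {n' : ℕ | ∃ k : ℕ, n' = m * k} := by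
  have hpow : A ^ n = 1 := Matrix.pow_eq_one_of_charpoly_dvd <| by
    rw [hA, Polynomial.map_cyclotomic_int]
    exact Polynomial.cyclotomic.dvd_X_pow_sub_one n ℚ
  have hfin : IsOfFinOrder A := isOfFinOrder_iff_pow_eq_one.mpr ⟨n, hn, hpow⟩
  obtain ⟨m, hm, hS⟩ :=
    hfin.exists_setOf_pow_mem_eq_setOf_dvd (MonoidHom.mrange (Int.castRingHom ℚ).mapMatrix)
  rw [← expSemigroup_eq_setOf_pow_mem] at hS
  refine ⟨fun h => ?_, m, hm, hS⟩
  have hmS : m ∈ expSemigroup A := hS ▸ dvd_refl m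
  rw [h] at hmS
  exact hm.ne' hmS
end

section
/- Let S be a symmetric numerical semigroup with S ≠ ℕ, and let m(S) denote its multiplicity (smallest nonzero element). If A is a d×d rational matrix with S(A) = S, then d ≥ m(S). Equivalently, the matricial dimension of a symmetric numerical semigroup is at least its multiplicity. -/
/-- If `c * q` is an integer with `c : ℤ`, then the denominator of `q` divides `c`. -/
lemma den_dvd_of_int_mul (q : ℚ) (c z : ℤ) (h : (c : ℚ) * q = z) : (q.den : ℤ) ∣ c := by
  have hd : ((q.den : ℚ)) ≠ 0 := by exact_mod_cast q.den_nz
  have h2 : c * q.num = z * q.den := by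
    have h1 : (c : ℚ) * q * q.den = z * q.den := by rw [h]
    have hq : q * (q.den : ℚ) = (q.num : ℚ) := by
      nth_rewrite 1 [← Rat.num_div_den q]
      exact div_mul_cancel₀ _ hd
    have : ((c * q.num : ℤ) : ℚ) = ((z * q.den : ℤ) : ℚ) := by
      push_cast
      rw [← hq]; ring_nf; ring_nf at h1; linarith
    exact_mod_cast this
  have hdvd : (q.den : ℤ) ∣ c * q.num := ⟨z, by linarith⟩
  have hcop : IsCoprime ((q.den : ℤ)) q.num := by
    rw [Int.isCoprime_iff_gcd_eq_one]
    simpa [Int.gcd, Nat.coprime_comm] using q.reduced.symm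
  exact hcop.dvd_of_dvd_mul_right hdvd

theorem stmt_16 (S : Set ℕ)
    -- `S` is a numerical semigroup
    (hzero : 0 ∈ S) (hadd : ∀ a ∈ S, ∀ b ∈ S, a + b ∈ S)
    (hfin : Sᶜ.Finite) (hne : S ≠ Set.univ)
    -- `g` is the Frobenius number of `S`
    (g : ℕ) (hg : g ∉ S) (hg' : ∀ n : ℕ, g < n → n ∈ S)
    -- `m` is the multiplicity of `S`
    (m : ℕ) (hmS : m ∈ S) (hm0 : m ≠ 0) (hmin : ∀ n ∈ S, n ≠ 0 → m ≤ n)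
    -- `S` is symmetric
    (hodd : Odd g)
    (hsym : ∀ x : ℤ, (¬ ∃ s ∈ S, (s : ℤ) = x) → ∃ s ∈ S, (s : ℤ) = (g : ℤ) - x)
    {d : ℕ} (A : Matrix (Fin d) (Fin d) ℚ) (hA : expSemigroup A = S) :
    m ≤ d := by
  by_contra hcon
  push_neg at hcon
  -- small positive numbers are not in S
  have hnotS : ∀ x : ℕ, 0 < x → x < m → x ∉ S := fun x hx1 hx2 hxS =>
    absurd (hmin x hxS (by omega)) (by omega)
  have hle_g : ∀ x : ℕ, x ∉ S → x ≤ g := by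
    intro x hx
    by_contra h
    exact hx (hg' x (by omega))
  have hdg : d ≤ g := by
    rcases Nat.eq_zero_or_pos d with h | h
    · omega
    · exact hle_g d (hnotS d h hcon)
  have hSint : ∀ n ∈ S, ∀ i j, ∃ z : ℤ, (A ^ n) i j = (z : ℚ) := by
    intro n hn
    rw [← hA] at hn
    exact hn
  -- it suffices to show `g ∈ S`, a contradiction
  refine absurd ?_ hg
  rw [← hA]
  intro i j
  -- the d+1 column vectors e_j, A e_j, ..., A^d e_j are linearly dependent
  set v : Fin (d + 1) → (Fin d → ℚ) := fun k => fun l => (A ^ (k : ℕ)) l j with hv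
  have hnli : ¬ LinearIndependent ℚ v := by
    intro hli
    have := hli.fintype_card_le_finrank
    simp [Module.finrank_fin_fun] at this
  obtain ⟨gc, hgc, k1, hk1⟩ := Fintype.not_linearIndependent_iff.mp hnli
  -- clear denominators
  set D : ℚ := ∏ k : Fin (d + 1), ((gc k).den : ℚ) with hD
  have hDne : D ≠ 0 := by
    apply Finset.prod_ne_zero_iff.mpr
    intro k _
    exact_mod_cast (gc k).den_nz
  set b : Fin (d + 1) → ℤ :=
    fun k => (gc k).num * ∏ l ∈ Finset.univ.erase k, ((gc l).den : ℤ) with hbdef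
  have hb : ∀ k, (b k : ℚ) = gc k * D := by
    intro k
    have hsplit : D = ((gc k).den : ℚ) * ∏ l ∈ Finset.univ.erase k, ((gc l).den : ℚ) :=
      (Finset.mul_prod_erase _ _ (Finset.mem_univ k)).symm
    have hnum : gc k * ((gc k).den : ℚ) = ((gc k).num : ℚ) := by
      have hdk : ((gc k).den : ℚ) ≠ 0 := by exact_mod_cast (gc k).den_nz
      nth_rewrite 1 [← Rat.num_div_den (gc k)]
      exact div_mul_cancel₀ _ hdk
    rw [hsplit, hbdef]
    push_cast
    rw [← mul_assoc, hnum]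
  have hbrel : ∑ k, (b k : ℚ) • v k = 0 := by
    have : ∑ k, (b k : ℚ) • v k = D • ∑ k, gc k • v k := by
      rw [Finset.smul_sum]
      refine Finset.sum_congr rfl fun k _ => ?_
      rw [hb k, smul_smul, mul_comm]
    rw [this, hgc, smul_zero]
  have hbne : b k1 ≠ 0 := by
    intro h
    have : (b k1 : ℚ) = 0 := by exact_mod_cast h
    rw [hb k1] at this
    exact hk1 (by simpa [hDne] using mul_eq_zero.mp this)
  -- extract gcd to get coefficients with gcd 1
  obtain ⟨c, hc1, hc2⟩ := Finset.extract_gcd b (Finset.univ_nonempty)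
  set G : ℤ := Finset.gcd Finset.univ b with hG
  have hGne : (G : ℚ) ≠ 0 := by
    have : G ≠ 0 := fun h => hbne (by
      have := Finset.gcd_eq_zero_iff.mp (hG ▸ h) k1 (Finset.mem_univ k1)
      exact this)
    exact_mod_cast this
  have hcrel : ∑ k, (c k : ℚ) • v k = 0 := by
    have h0 : (G : ℚ) • ∑ k, (c k : ℚ) • v k = 0 := by
      rw [Finset.smul_sum]
      rw [show (0 : Fin d → ℚ) = ∑ k, (b k : ℚ) • v k from hbrel.symm]
      refine Finset.sum_congr rfl fun k _ => ?_
      rw [smul_smul, hc1 k (Finset.mem_univ k)]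
      push_cast
      ring_nf
    rcases smul_eq_zero.mp h0 with h | h
    · exact absurd h hGne
    · exact h
  -- key step: for every k0, c k0 * (A^g) i j is an integer
  have key : ∀ k0 : Fin (d + 1), ∃ z : ℤ, (c k0 : ℚ) * (A ^ g) i j = (z : ℚ) := by
    intro k0
    have hk0d : (k0 : ℕ) ≤ d := by omega
    have hk0g : (k0 : ℕ) ≤ g := le_trans hk0d hdg
    have hrow : ∀ l, ∑ k, (c k : ℚ) * (A ^ (k : ℕ)) l j = 0 := by
      intro l
      have := congrFun hcrel l
      simpa [v, Finset.sum_apply] using this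
    have hmain : ∑ k, (c k : ℚ) * (A ^ ((g - (k0 : ℕ)) + (k : ℕ))) i j = 0 := by
      have hexp : ∀ k : Fin (d + 1),
          (A ^ ((g - (k0 : ℕ)) + (k : ℕ))) i j
            = ∑ l, (A ^ (g - (k0 : ℕ))) i l * (A ^ (k : ℕ)) l j := by
        intro k
        rw [pow_add, Matrix.mul_apply]
      calc ∑ k, (c k : ℚ) * (A ^ ((g - (k0 : ℕ)) + (k : ℕ))) i j
          = ∑ k, ∑ l, (A ^ (g - (k0 : ℕ))) i l * ((c k : ℚ) * (A ^ (k : ℕ)) l j) := by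
            refine Finset.sum_congr rfl fun k _ => ?_
            rw [hexp k, Finset.mul_sum]
            refine Finset.sum_congr rfl fun l _ => by ring
        _ = ∑ l, (A ^ (g - (k0 : ℕ))) i l * ∑ k, (c k : ℚ) * (A ^ (k : ℕ)) l j := by
            rw [Finset.sum_comm]
            refine Finset.sum_congr rfl fun l _ => by rw [Finset.mul_sum]
        _ = 0 := by
            simp [hrow]
    rw [← Finset.add_sum_erase _ _ (Finset.mem_univ k0),
        show (g - (k0 : ℕ)) + (k0 : ℕ) = g by omega] at hmain
    have hints : ∀ k ∈ Finset.univ.erase k0,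
        ∃ z : ℤ, (A ^ ((g - (k0 : ℕ)) + (k : ℕ))) i j = (z : ℚ) := by
      intro k hk
      have hkne : (k : ℕ) ≠ (k0 : ℕ) := fun h =>
        (Finset.mem_erase.mp hk).1 (Fin.ext h)
      have hkd : (k : ℕ) ≤ d := by omega
      apply hSint
      rcases lt_or_gt_of_ne hkne with h | h
      · -- exponent is g - (k0 - k), which is in S by symmetry
        have hx : ((k0 : ℕ) - (k : ℕ)) ∉ S := hnotS _ (by omega) (by omega)
        have hnx : ¬ ∃ s ∈ S, (s : ℤ) = (((k0 : ℕ) - (k : ℕ) : ℕ) : ℤ) := by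
          rintro ⟨s, hs, hseq⟩
          have : s = (k0 : ℕ) - (k : ℕ) := by exact_mod_cast hseq
          exact hx (this ▸ hs)
        obtain ⟨s, hs, hseq⟩ := hsym _ hnx
        have hcast : ((((k0 : ℕ) - (k : ℕ)) : ℕ) : ℤ) = (k0 : ℕ) - (k : ℕ) := by
          omega
        have : s = (g - (k0 : ℕ)) + (k : ℕ) := by
          rw [hcast] at hseq
          omega
        exact this ▸ hs
      · exact hg' _ (by omega)
    choose! zf hzf using hints
    refine ⟨-∑ k ∈ Finset.univ.erase k0, c k * zf k, ?_⟩
    have heq : (c k0 : ℚ) * (A ^ g) i j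
        = -∑ k ∈ Finset.univ.erase k0, (c k : ℚ) * (A ^ ((g - (k0 : ℕ)) + (k : ℕ))) i j :=
      eq_neg_of_add_eq_zero_left hmain
    rw [heq]
    push_cast
    congr 1
    refine Finset.sum_congr rfl fun k hk => ?_
    rw [hzf k hk]
  -- conclude: the denominator of (A^g) i j divides every c k, hence divides gcd = 1
  set q : ℚ := (A ^ g) i j with hq
  have hdvd : ∀ k : Fin (d + 1), (q.den : ℤ) ∣ c k := by
    intro k
    obtain ⟨z, hz⟩ := key k
    exact den_dvd_of_int_mul q (c k) z hz
  have hdvd1 : (q.den : ℤ) ∣ Finset.gcd Finset.univ c :=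
    Finset.dvd_gcd fun k _ => hdvd k
  rw [hc2] at hdvd1
  have hden1 : q.den = 1 := by
    have h1 : q.den ∣ 1 := by exact_mod_cast hdvd1
    exact Nat.dvd_one.mp h1
  exact ⟨q.num, ((Rat.den_eq_one_iff q).mp hden1).symm⟩
end

section
/- Let S be a pseudosymmetric numerical semigroup with S ≠ ℕ, with Frobenius number g(S) and multiplicity m(S), and suppose g(S) ≥ 2·m(S). If A is a d×d rational matrix with S(A) = S, then d ≥ m(S). -/
/-!
Suppose `d < m`. Then `1, …, d` are gaps of `S` smaller than `g / 2`, so by pseudosymmetry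
`g - 1, …, g - d` lie in `S`. Since some power of `A` is an integer matrix, `A` is integral
over `ℤ`, and by Gauss's lemma its minimal polynomial over `ℚ` is monic with integer
coefficients and has degree at most `d`. The recurrence it induces writes `A ^ g` as an integer
combination of `A ^ (g - 1), …, A ^ (g - d)`, so `g ∈ S`, a contradiction.
-/

open Polynomial

section MinpolyRecurrence

variable {R K L : Type*} [CommRing R] [IsIntegrallyClosed R] [Field K]
  [Algebra R K] [IsFractionRing R K] [Ring L] [Algebra R L] [Algebra K L] [IsScalarTower R K L]
  {x : L}

theorem exists_map_eq_minpoly_of_isIntegral (hx : IsIntegral R x) :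
    ∃ Q : R[X], Q.map (algebraMap R K) = minpoly K x := by
  obtain ⟨P, hPmonic, hPx⟩ := hx
  have hdvd : minpoly K x ∣ P.map (algebraMap R K) :=
    minpoly.dvd K x (by rwa [aeval_map_algebraMap])
  obtain ⟨Q, hQ⟩ := IsIntegrallyClosed.eq_map_mul_C_of_dvd K hPmonic hdvd
  have hmonic : (minpoly K x).Monic := minpoly.monic (IsIntegral.tower_top ⟨P, hPmonic, hPx⟩)
  rw [hmonic.leadingCoeff, C_1, mul_one] at hQ
  exact ⟨Q, hQ⟩

theorem pow_mem_of_forall_pow_sub_mem (hx : IsIntegral R x) (M : Submodule R L) {g : ℕ}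
    (hg : (minpoly K x).natDegree ≤ g)
    (hM : ∀ k ∈ Finset.Icc 1 (minpoly K x).natDegree, x ^ (g - k) ∈ M) : x ^ g ∈ M := by
  set e := (minpoly K x).natDegree
  obtain ⟨Q, hQ⟩ := exists_map_eq_minpoly_of_isIntegral (K := K) hx
  have hmonic : (minpoly K x).Monic := minpoly.monic hx.tower_top
  have hrec : x ^ e = -∑ k ∈ Finset.range e, (minpoly K x).coeff k • x ^ k := by
    have hsum : ∑ k ∈ Finset.range (e + 1), (minpoly K x).coeff k • x ^ k = 0 := by
      rw [← aeval_eq_sum_range, minpoly.aeval]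
    rw [Finset.sum_range_succ, hmonic.coeff_natDegree, one_smul] at hsum
    exact eq_neg_of_add_eq_zero_right hsum
  have hxg : x ^ g = -∑ k ∈ Finset.range e, Q.coeff k • x ^ (g - (e - k)) := by
    rw [show g = g - e + e by omega, pow_add, hrec, mul_neg, Finset.mul_sum]
    refine congrArg Neg.neg (Finset.sum_congr rfl fun k hk => ?_)
    rw [mul_smul_comm, ← pow_add, ← hQ, coeff_map, algebraMap_smul]
    congr 2
    have := Finset.mem_range.mp hk
    omega
  rw [hxg]
  refine M.neg_mem (M.sum_mem fun k hk => M.smul_mem _ (hM _ ?_))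
  have := Finset.mem_range.mp hk
  simp only [Finset.mem_Icc]
  omega

end MinpolyRecurrence

namespace Matrix

variable {ι : Type*} [Fintype ι] [DecidableEq ι]

variable (ι) in
def intMatrices : Submodule ℤ (Matrix ι ι ℚ) where
  carrier := {M | ∀ i j, ∃ z : ℤ, M i j = z}
  add_mem' {M N} hM hN i j := by
    obtain ⟨a, ha⟩ := hM i j
    obtain ⟨b, hb⟩ := hN i j
    exact ⟨a + b, by simp [ha, hb]⟩
  zero_mem' _ _ := ⟨0, by simp⟩
  smul_mem' c M hM i j := by
    obtain ⟨a, ha⟩ := hM i j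
    exact ⟨c * a, by simp [ha]⟩

theorem mem_expSemigroup_iff {A : Matrix ι ι ℚ} {n : ℕ} :
    n ∈ expSemigroup A ↔ A ^ n ∈ intMatrices ι :=
  Iff.rfl

theorem isIntegral_of_mem_intMatrices {M : Matrix ι ι ℚ} (hM : M ∈ intMatrices ι) :
    IsIntegral ℤ M := by
  choose C hC using hM
  have hmap : (Int.castRingHom ℚ).mapMatrix (C : Matrix ι ι ℤ) = M := by
    ext i j
    exact (hC i j).symm
  rw [← hmap]
  exact map_isIntegral_int _ (Matrix.isIntegral (C : Matrix ι ι ℤ))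

theorem natDegree_minpoly_le_card {K : Type*} [Field K] (M : Matrix ι ι K) :
    (minpoly K M).natDegree ≤ Fintype.card ι :=
  (natDegree_le_of_dvd M.minpoly_dvd_charpoly M.charpoly_monic.ne_zero).trans
    M.charpoly_natDegree_eq_dim.le

theorem mem_expSemigroup_of_forall_sub_mem {A : Matrix ι ι ℚ} {n g : ℕ} (hn : n ≠ 0)
    (hnA : n ∈ expSemigroup A) (hg : Fintype.card ι ≤ g)
    (hA : ∀ k ∈ Finset.Icc 1 (Fintype.card ι), g - k ∈ expSemigroup A) :
    g ∈ expSemigroup A := by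
  have hint : IsIntegral ℤ A :=
    IsIntegral.of_pow (Nat.pos_of_ne_zero hn) (isIntegral_of_mem_intMatrices hnA)
  have hdeg := natDegree_minpoly_le_card A
  refine mem_expSemigroup_iff.mpr <| pow_mem_of_forall_pow_sub_mem (K := ℚ) hint _
    (hdeg.trans hg) fun k hk => mem_expSemigroup_iff.mp <| hA k ?_
  simp only [Finset.mem_Icc] at hk ⊢
  omega

end Matrix

theorem frobenius_sub_mem_of_lt_multiplicity {S : Set ℕ} {g m : ℕ}
    (hmin : ∀ n ∈ S, n ≠ 0 → m ≤ n)
    (hpsym : ∀ x : ℤ, (¬ ∃ s ∈ S, (s : ℤ) = x) → x ≠ (g : ℤ) / 2 →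
      ∃ s ∈ S, (s : ℤ) = (g : ℤ) - x)
    (hgm : 2 * m ≤ g) {k : ℕ} (hk0 : k ≠ 0) (hkm : k < m) : g - k ∈ S := by
  have hgap : ¬ ∃ s ∈ S, (s : ℤ) = k := by
    rintro ⟨s, hs, hsk⟩
    have := hmin s hs (by omega)
    omega
  obtain ⟨s, hs, hsk⟩ := hpsym k hgap (by omega)
  rwa [show g - k = s by omega]

theorem stmt_17_general (S : Set ℕ)
    -- `g` is the Frobenius number of `S`
    (g : ℕ) (hg : g ∉ S) (hg' : ∀ n : ℕ, g < n → n ∈ S)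
    -- `m` is the multiplicity of `S`
    (m : ℕ) (hmin : ∀ n ∈ S, n ≠ 0 → m ≤ n)
    -- `S` is pseudosymmetric
    (hpsym : ∀ x : ℤ, (¬ ∃ s ∈ S, (s : ℤ) = x) → x ≠ (g : ℤ) / 2 →
      ∃ s ∈ S, (s : ℤ) = (g : ℤ) - x)
    -- the hypothesis `g(S) ≥ 2 m(S)`
    (hgm : 2 * m ≤ g)
    {d : ℕ} (A : Matrix (Fin d) (Fin d) ℚ) (hA : expSemigroup A = S) :
    m ≤ d := by
  by_contra! hdm
  subst hA
  refine hg (Matrix.mem_expSemigroup_of_forall_sub_mem g.succ_ne_zero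
    (hg' _ g.lt_succ_self) (by simp only [Fintype.card_fin]; omega) fun k hk => ?_)
  simp only [Fintype.card_fin, Finset.mem_Icc] at hk
  exact frobenius_sub_mem_of_lt_multiplicity hmin hpsym hgm (by omega) (by omega)

theorem stmt_17 (S : Set ℕ)
    -- `S` is a numerical semigroup
    (hzero : 0 ∈ S) (hadd : ∀ a ∈ S, ∀ b ∈ S, a + b ∈ S)
    (hfin : Sᶜ.Finite) (hne : S ≠ Set.univ)
    -- `g` is the Frobenius number of `S`
    (g : ℕ) (hg : g ∉ S) (hg' : ∀ n : ℕ, g < n → n ∈ S)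
    -- `m` is the multiplicity of `S`
    (m : ℕ) (hmS : m ∈ S) (hm0 : m ≠ 0) (hmin : ∀ n ∈ S, n ≠ 0 → m ≤ n)
    -- `S` is pseudosymmetric
    (heven : Even g)
    (hpsym : ∀ x : ℤ, (¬ ∃ s ∈ S, (s : ℤ) = x) → x ≠ (g : ℤ) / 2 →
      ∃ s ∈ S, (s : ℤ) = (g : ℤ) - x)
    -- the hypothesis `g(S) ≥ 2 m(S)`
    (hgm : 2 * m ≤ g)
    {d : ℕ} (A : Matrix (Fin d) (Fin d) ℚ) (hA : expSemigroup A = S) :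
    m ≤ d :=
  stmt_17_general S g hg hg' m hmin hpsym hgm A hA
end

section
/- Let S be a numerical semigroup with {0} ≠ S ≠ ℕ and Frobenius number g = g(S). Then there exists a (g+1)×(g+1) rational matrix A such that A^(g+1) = 0, A^g ≠ 0, and S(A) = S. -/
theorem stmt_18 (S : Set ℕ)
    -- `S` is a numerical semigroup
    (hzero : 0 ∈ S) (hadd : ∀ a ∈ S, ∀ b ∈ S, a + b ∈ S)
    (hfin : Sᶜ.Finite) (hne_triv : S ≠ {0}) (hne : S ≠ Set.univ)
    -- `g` is the Frobenius number of `S`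
    (g : ℕ) (hg : g ∉ S) (hg' : ∀ n : ℕ, g < n → n ∈ S) :
    ∃ A : Matrix (Fin (g + 1)) (Fin (g + 1)) ℚ,
      A ^ (g + 1) = 0 ∧ A ^ g ≠ 0 ∧ expSemigroup A = S := by
  classical
  set f : ℕ → ℤ := fun k => if k ∈ S then 0 else -1 with hf
  set A : Matrix (Fin (g+1)) (Fin (g+1)) ℚ :=
    Matrix.of (fun i j => if (j:ℕ) = (i:ℕ) + 1 then (2:ℚ) ^ (f (j:ℕ) - f (i:ℕ)) else 0) with hA
  have key : ∀ n : ℕ, ∀ i j : Fin (g+1),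
      (A ^ n) i j = if (j:ℕ) = (i:ℕ) + n then (2:ℚ) ^ (f (j:ℕ) - f (i:ℕ)) else 0 := by
    intro n
    induction n with
    | zero =>
      intro i j
      simp only [pow_zero, Matrix.one_apply, Nat.add_zero]
      by_cases h : i = j
      · subst h; simp
      · rw [if_neg h, if_neg (fun hv => h (Fin.ext hv.symm))]
    | succ n ih =>
      intro i j
      rw [pow_succ, Matrix.mul_apply]
      by_cases h : (j:ℕ) = (i:ℕ) + (n+1)
      · have hk : (i:ℕ) + n < g + 1 := by have := j.isLt; omega
        set k0 : Fin (g+1) := ⟨(i:ℕ)+n, hk⟩ with hk0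
        rw [Finset.sum_eq_single k0]
        · rw [ih, if_pos rfl, hA]
          simp only [Matrix.of_apply]
          rw [if_pos (by omega : (j:ℕ) = (i:ℕ) + n + 1), if_pos h]
          rw [← zpow_add₀ (by norm_num : (2:ℚ) ≠ 0)]
          congr 1
          ring
        · intro k _ hkne
          rw [ih]
          by_cases hk' : (k:ℕ) = (i:ℕ) + n
          · exact absurd (Fin.ext hk') hkne
          · rw [if_neg hk', zero_mul]
        · intro h'; exact absurd (Finset.mem_univ k0) h'
      · rw [if_neg h]
        apply Finset.sum_eq_zero
        intro k _
        rw [ih]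
        by_cases hk' : (k:ℕ) = (i:ℕ) + n
        · rw [hA]; simp only [Matrix.of_apply]
          rw [if_neg (by omega : ¬ (j:ℕ) = (k:ℕ) + 1), mul_zero]
        · rw [if_neg hk', zero_mul]
  refine ⟨A, ?_, ?_, ?_⟩
  · ext i j
    rw [key]
    rw [if_neg (by have := j.isLt; omega)]
    simp
  · intro hz'
    have h0 : ((0:Fin (g+1)):ℕ) = 0 := rfl
    have := congrFun (congrFun hz' 0) ⟨g, by omega⟩
    rw [key] at this
    rw [if_pos (by simp [h0])] at this
    exact zpow_ne_zero _ (by norm_num : (2:ℚ) ≠ 0) (by simpa using this)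
  · ext n
    simp only [expSemigroup, Set.mem_setOf_eq]
    constructor
    · intro h
      by_cases hn : g < n
      · exact hg' n hn
      · by_contra hnS
        obtain ⟨z, hz⟩ := h 0 ⟨n, by omega⟩
        rw [key] at hz
        have h0 : ((0:Fin (g+1)):ℕ) = 0 := rfl
        rw [if_pos (by simp [h0])] at hz
        have hf0 : f 0 = 0 := by simp [hf, hzero]
        have hfn : f n = -1 := by simp [hf, hnS]
        simp only [h0, Fin.val_mk] at hz
        rw [hfn, hf0] at hz
        norm_num at hz
        have h2 : ((2 * z : ℤ) : ℚ) = 1 := by push_cast; rw [← hz]; ring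
        have h3 : (2 * z : ℤ) = 1 := by exact_mod_cast h2
        omega
    · intro hnS i j
      rw [key]
      by_cases h : (j:ℕ) = (i:ℕ) + n
      · rw [if_pos h]
        have hge : 0 ≤ f (j:ℕ) - f (i:ℕ) := by
          by_cases hi : (i:ℕ) ∈ S
          · have hj : (j:ℕ) ∈ S := by rw [h]; exact hadd _ hi _ hnS
            simp [hf, hi, hj]
          · simp only [hf]
            rw [if_neg hi]
            split <;> omega
        set m := f (j:ℕ) - f (i:ℕ) with hm
        lift m to ℕ using hge with m' hm'
        exact ⟨2 ^ m', by rw [zpow_natCast]; push_cast; ring⟩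
      · exact ⟨0, by rw [if_neg h]; simp⟩
end

section
/- Let S be any additive submonoid of ℕ with S ≠ {0} (not necessarily of finite complement). Then there exist a natural number d ≥ 1 and a d×d rational matrix A such that S(A) = S. -/
section WeightedFunMatrix

variable {ι : Type*} [Fintype ι] [DecidableEq ι]

/-- The matrix `D⁻¹ P D` where `P` is the 0/1 matrix of `σ` and `D = diag (2 ^ p)`. -/
def weightedFunMatrix (σ : ι → ι) (p : ι → ℤ) : Matrix ι ι ℚ :=
  Matrix.of fun i j => if σ i = j then 2 ^ (p j - p i) else 0

lemma weightedFunMatrix_mul (σ τ : ι → ι) (p : ι → ℤ) :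
    weightedFunMatrix σ p * weightedFunMatrix τ p = weightedFunMatrix (τ ∘ σ) p := by
  ext i j
  simp only [weightedFunMatrix, Matrix.mul_apply, Matrix.of_apply, ite_mul, zero_mul,
    Finset.sum_ite_eq, Finset.mem_univ, if_true, Function.comp_apply]
  split_ifs
  · rw [← zpow_add₀ two_ne_zero]; ring_nf
  · exact mul_zero _

lemma weightedFunMatrix_pow (σ : ι → ι) (p : ι → ℤ) (n : ℕ) :
    weightedFunMatrix σ p ^ n = weightedFunMatrix σ^[n] p := by
  induction n with
  | zero => ext i j; by_cases h : i = j <;> simp [weightedFunMatrix, h]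
  | succ n ih => rw [pow_succ, ih, weightedFunMatrix_mul, Function.iterate_succ']

lemma exists_intCast_eq_two_zpow_iff (k : ℤ) : (∃ z : ℤ, (2 : ℚ) ^ k = z) ↔ 0 ≤ k := by
  refine ⟨fun ⟨z, hz⟩ => ?_, fun hk => ⟨2 ^ k.toNat, by simp [← zpow_natCast, hk]⟩⟩
  by_contra! hk
  have hpos : (0 : ℚ) < z := hz ▸ zpow_pos two_pos k
  have hlt : (z : ℚ) < 1 := hz ▸ zpow_lt_one_of_neg₀ one_lt_two hk
  have : (0 : ℤ) < z := by exact_mod_cast hpos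
  have : z < (1 : ℤ) := by exact_mod_cast hlt
  omega

lemma expSemigroup_weightedFunMatrix (σ : ι → ι) (p : ι → ℤ) :
    expSemigroup (weightedFunMatrix σ p) = {n | ∀ i, p i ≤ p (σ^[n] i)} := by
  ext n
  simp only [expSemigroup, weightedFunMatrix_pow, Set.mem_ofPred_eq]
  refine ⟨fun h i => ?_, fun h i j => ?_⟩
  · simpa [weightedFunMatrix, exists_intCast_eq_two_zpow_iff] using h i (σ^[n] i)
  · by_cases hj : σ^[n] i = j
    · subst hj; simpa [weightedFunMatrix, exists_intCast_eq_two_zpow_iff] using h i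
    · exact ⟨0, by simp [weightedFunMatrix, hj]⟩

end WeightedFunMatrix

lemma expSemigroup_reindex {ι κ : Type*} [Fintype ι] [DecidableEq ι] [Fintype κ] [DecidableEq κ]
    (e : ι ≃ κ) (A : Matrix ι ι ℚ) : expSemigroup (Matrix.reindex e e A) = expSemigroup A := by
  have hpow (n : ℕ) : Matrix.reindex e e A ^ n = Matrix.reindex e e (A ^ n) := by
    simpa [Matrix.coe_reindexAlgEquiv] using (map_pow (Matrix.reindexAlgEquiv ℚ ℚ e) A n).symm
  ext n
  simp only [expSemigroup, Set.mem_ofPred_eq, hpow]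
  simp only [Matrix.reindex_apply, Matrix.submatrix_apply]
  exact ⟨fun h i j => by simpa using h (e i) (e j), fun h i j => h _ _⟩

lemma Sum.map_iterate {α β : Type*} (σ : α → α) (τ : β → β) (n : ℕ) :
    (Sum.map σ τ)^[n] = Sum.map σ^[n] τ^[n] := by
  induction n with
  | zero => simp
  | succ n ih => rw [Function.iterate_succ, ih, Sum.map_comp_map, ← Function.iterate_succ,
      ← Function.iterate_succ]

def cycShift (k : ℕ) (i : Fin (k + 1)) : Fin (k + 1) := ⟨(i + 1) % (k + 1), Nat.mod_lt _ k.succ_pos⟩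

lemma cycShift_iterate_val (k n : ℕ) (i : Fin (k + 1)) :
    ((cycShift k)^[n] i : ℕ) = (i + n) % (k + 1) := by
  induction n with
  | zero => simp [Nat.mod_eq_of_lt i.isLt]
  | succ n ih => rw [Function.iterate_succ_apply', cycShift, Fin.val_mk, ih, Nat.mod_add_mod]; rfl

lemma forall_val_le_cycShift_iterate_iff (k n : ℕ) :
    (∀ i : Fin (k + 1), (i : ℕ) ≤ (cycShift k)^[n] i) ↔ k + 1 ∣ n := by
  simp only [cycShift_iterate_val]
  refine ⟨fun h => ?_, fun h i => ?_⟩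
  · by_contra hn
    have hr : 0 < n % (k + 1) := Nat.pos_of_ne_zero (mt Nat.dvd_of_mod_eq_zero hn)
    have hrk : n % (k + 1) < k + 1 := Nat.mod_lt _ k.succ_pos
    -- starting at `k + 1 - n % (k + 1)`, `n` steps wrap around to `0`
    have := h ⟨k + 1 - n % (k + 1), by omega⟩
    rw [Fin.val_mk, ← Nat.add_mod_mod, Nat.sub_add_cancel hrk.le, Nat.mod_self] at this
    omega
  · obtain ⟨c, rfl⟩ := h
    rw [Nat.add_mul_mod_self_left, Nat.mod_eq_of_lt i.isLt]

def satShift (m : ℕ) (i : Fin (m + 1)) : Fin (m + 1) := ⟨min (i + 1) m, by omega⟩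

lemma satShift_iterate_val (m n : ℕ) (i : Fin (m + 1)) :
    ((satShift m)^[n] i : ℕ) = min (i + n) m := by
  induction n with
  | zero => simp; omega
  | succ n ih => rw [Function.iterate_succ_apply', satShift, Fin.val_mk, ih]; omega

open Classical in
noncomputable def gapWeight (N : Set ℕ) (j : ℕ) : ℤ := if j ∈ N then j else -1

lemma neg_one_le_gapWeight (N : Set ℕ) (j : ℕ) : -1 ≤ gapWeight N j := by
  unfold gapWeight; split <;> omega

lemma forall_gapWeight_le_satShift_iterate_iff {N : AddSubmonoid ℕ} {m : ℕ}
    (hm : ∀ n, m ≤ n → n ∈ N) (n : ℕ) :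
    (∀ i : Fin (m + 1), gapWeight N i ≤ gapWeight N ((satShift m)^[n] i)) ↔ n ∈ N := by
  simp only [satShift_iterate_val]
  refine ⟨fun h => ?_, fun hn i => ?_⟩
  · by_contra hn
    have hnm : n < m := by by_contra! h'; exact hn (hm n h')
    have := h 0
    simp [gapWeight, N.zero_mem, hn, min_eq_left hnm.le] at this
  · by_cases hi : (i : ℕ) ∈ N
    · have hmem : min (i + n) m ∈ N := by
        rcases min_choice (i + n) m with h | h <;> rw [h]
        exacts [N.add_mem hi hn, hm m le_rfl]
      simp only [gapWeight, hi, hmem, if_true, SetLike.mem_coe]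
      have := i.isLt
      omega
    · rw [show gapWeight N i = -1 from if_neg hi]
      exact neg_one_le_gapWeight _ _

lemma AddSubmonoid.exists_forall_ge_setGcd_dvd_mem (S : AddSubmonoid ℕ) :
    ∃ m, ∀ n, m ≤ n → Nat.setGcd S ∣ n → n ∈ S := by
  simpa only [AddSubmonoid.closure_eq] using Nat.exists_mem_closure_of_ge (S : Set ℕ)

def AddSubmonoid.unionIci (S : AddSubmonoid ℕ) (m : ℕ) : AddSubmonoid ℕ where
  carrier := S ∪ Set.Ici m
  add_mem' := by
    rintro a b (ha | ha) (hb | hb)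
    · exact Or.inl (S.add_mem ha hb)
    all_goals exact Or.inr (by simp only [Set.mem_Ici] at *; omega)
  zero_mem' := Or.inl S.zero_mem

lemma AddSubmonoid.mem_unionIci {S : AddSubmonoid ℕ} {m n : ℕ} :
    n ∈ S.unionIci m ↔ n ∈ S ∨ m ≤ n := Iff.rfl

theorem stmt_19 (S : Set ℕ)
    -- `S` is an additive submonoid of ℕ
    (hzero : 0 ∈ S) (hadd : ∀ a ∈ S, ∀ b ∈ S, a + b ∈ S)
    -- which is nontrivial
    (hne_triv : S ≠ {0}) :
    ∃ d : ℕ, 1 ≤ d ∧ ∃ A : Matrix (Fin d) (Fin d) ℚ, expSemigroup A = S := by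
  let M : AddSubmonoid ℕ :=
    { carrier := S, add_mem' := fun ha hb => hadd _ ha _ hb, zero_mem' := hzero }
  obtain ⟨k, hk⟩ : ∃ k, Nat.setGcd S = k + 1 := Nat.exists_eq_succ_of_ne_zero fun h =>
    hne_triv ((Nat.setGcd_eq_zero_iff.mp h).antisymm (Set.singleton_subset_iff.mpr hzero))
  obtain ⟨m, hm⟩ := M.exists_forall_ge_setGcd_dvd_mem
  have hS : S = {n | k + 1 ∣ n} ∩ M.unionIci m := by
    ext n
    refine ⟨fun hn => ⟨hk ▸ Nat.setGcd_dvd_of_mem hn, Or.inl hn⟩, ?_⟩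
    rintro ⟨hdvd, hn | hn⟩
    exacts [hn, hm n hn (hk ▸ hdvd)]
  refine ⟨k + 1 + (m + 1), by omega, Matrix.reindex finSumFinEquiv finSumFinEquiv
    (weightedFunMatrix (Sum.map (cycShift k) (satShift m))
      (Sum.elim (fun i => (i : ℤ)) (fun i => gapWeight (M.unionIci m) i))), ?_⟩
  rw [expSemigroup_reindex, expSemigroup_weightedFunMatrix, hS]
  ext n
  simp only [Sum.forall, Sum.map_iterate, Sum.map_inl, Sum.map_inr, Sum.elim_inl, Sum.elim_inr,
    Nat.cast_le, forall_val_le_cycShift_iterate_iff,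
    forall_gapWeight_le_satShift_iterate_iff (fun _ => AddSubmonoid.mem_unionIci.mpr ∘ Or.inr)]
  rfl
end
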